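/- arXiv:0811.1331 — 2 statements merged into one kernel-verified Lean document; each statement's English description precedes it below -/
import Mathlib

section
/- Let n ≥ 2. The elements η_{i,j} (1 ≤ i < j ≤ n) together with the elements τ^k_{i,j} (1 ≤ i < j ≤ n, 1 ≤ k ≤ n, k ∉ {i,j}) are linearly independent in E² and form a basis of the degree-two part I² = I ∩ E² of the ideal I; in particular dim_k I² = binom(n,2)·(n−1). -/
noncomputable section

open ExteriorAlgebra

/-- Index set for the generators `e_{p,q}`, `p ≠ q`, of the exterior algebra `E`. -/
abbrev RIdx (n : ℕ) := {pq : Fin n × Fin n // pq.1 ≠ pq.2}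

/-- The exterior algebra `E` on the vector space with basis `{e_{p,q} : p ≠ q}`. -/
abbrev Egen (k : Type) [Field k] (n : ℕ) := ExteriorAlgebra k (RIdx n →₀ k)

/-- The degree-one generator `e_{p,q}` of `E`. -/
def egen (k : Type) [Field k] {n : ℕ} (p q : Fin n) (h : p ≠ q) : Egen k n :=
  ExteriorAlgebra.ι k (Finsupp.single (⟨(p, q), h⟩ : RIdx n) (1 : k))

/-- The degree-one generator `e_{p,q}` indexed by an element of `RIdx n`. -/
def egen' (k : Type) [Field k] {n : ℕ} (x : RIdx n) : Egen k n :=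
  ExteriorAlgebra.ι k (Finsupp.single x (1 : k))

/-- The generators `η_{i,j} = e_{i,j} e_{j,i}` (for `i < j`) and
`τ^m_{i,j} = (e_{m,i} - e_{j,i})(e_{m,j} - e_{i,j})` (for `i < j`, `m ∉ {i,j}`)
of the ideal `I`. -/
def resGens (k : Type) [Field k] (n : ℕ) : Set (Egen k n) :=
  {x | ∃ (i j : Fin n) (hij : i < j),
      x = egen k i j hij.ne * egen k j i hij.ne'} ∪
  {x | ∃ (i j m : Fin n) (hij : i < j) (hmi : m ≠ i) (hmj : m ≠ j),
      x = (egen k m i hmi - egen k j i hij.ne') * (egen k m j hmj - egen k i j hij.ne)}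

/-- The two-sided ideal `I` of `E` generated by the `η`'s and `τ`'s. -/
def resIdeal (k : Type) [Field k] (n : ℕ) : TwoSidedIdeal (Egen k n) :=
  TwoSidedIdeal.span (resGens k n)

/-- The quotient algebra `A = E/I`, i.e. `H^*(PΣ_n; k)`. -/
abbrev resA (k : Type) [Field k] (n : ℕ) := (resIdeal k n).ringCon.Quotient

/-- The quotient map `π : E → A = E/I` as a `k`-algebra homomorphism. -/
def resπ (k : Type) [Field k] (n : ℕ) : Egen k n →ₐ[k] resA k n :=
  { (resIdeal k n).ringCon.mk' with commutes' := fun _ => rfl }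

/-- The degree-`m` graded piece `A^m` of `A = E/I`: the image of `E^m = ⋀^m` in `A`. -/
def resAmod (k : Type) [Field k] (n : ℕ) (m : ℕ) : Submodule k (resA k n) :=
  Submodule.map (resπ k n).toLinearMap (⋀[k]^m (RIdx n →₀ k))

/-- The first resonance variety `R¹ = {a ∈ A¹ : H¹(A, δ_a) ≠ 0}`:  `H¹(A,δ_a) ≠ 0` iff some
`x ∈ A¹ = ker(δ_a : A¹ → A²)`-element with `a·x = 0` is not in the image of `δ_a : A⁰ → A¹`. -/
def resR1 (k : Type) [Field k] (n : ℕ) : Set (resA k n) :=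
  {a | a ∈ resAmod k n 1 ∧
    ∃ x ∈ resAmod k n 1, a * x = 0 ∧
      x ∉ Submodule.map (LinearMap.mulLeft k a) (resAmod k n 0)}

/-- The subspace `C_{i,j} = span{e_{i,j}, e_{j,i}}` of `A¹`. -/
def resC2 (k : Type) [Field k] (n : ℕ) (i j : Fin n) (hij : i ≠ j) :
    Submodule k (resA k n) :=
  Submodule.span k {resπ k n (egen k i j hij), resπ k n (egen k j i hij.symm)}

/-- The subspace `C_{i,j,m} = span{e_{j,i} − e_{m,i}, e_{i,j} − e_{m,j}, e_{i,m} − e_{j,m}}`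
of `A¹`. -/
def resC3 (k : Type) [Field k] (n : ℕ) (i j m : Fin n)
    (hij : i ≠ j) (him : i ≠ m) (hjm : j ≠ m) : Submodule k (resA k n) :=
  Submodule.span k {resπ k n (egen k j i hij.symm - egen k m i him.symm),
                    resπ k n (egen k i j hij - egen k m j hjm.symm),
                    resπ k n (egen k i m him - egen k j m hjm)}

/-- The two-sided ideal `I`, viewed as a `k`-subspace of `E`. -/
def resIdealSub (k : Type) [Field k] (n : ℕ) : Submodule k (Egen k n) where
  carrier := resIdeal k n
  add_mem' := (resIdeal k n).add_mem
  zero_mem' := (resIdeal k n).zero_mem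
  smul_mem' c x hx := by
    have h := (resIdeal k n).mul_mem_left (algebraMap k (Egen k n) c) x hx
    simpa [Algebra.smul_def] using h

/-- The degree-two part `I² = I ∩ E²` of the ideal `I`, as a `k`-subspace of `E`. -/
def resI2 (k : Type) [Field k] (n : ℕ) : Submodule k (Egen k n) :=
  resIdealSub k n ⊓ ⋀[k]^2 (RIdx n →₀ k)

/-- The map `ψ_a : I² → E` (with image in `E³` when `a ∈ E¹`), `x ↦ a·x`. -/
def resPsi (k : Type) [Field k] (n : ℕ) (a : Egen k n) : resI2 k n →ₗ[k] Egen k n :=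
  (LinearMap.mulLeft k a).comp (resI2 k n).subtype

end
/-- The family of generators `η_{i,j}` (indexed by pairs `i < j`). -/
noncomputable def etaFam (k : Type) [Field k] (n : ℕ)
    (p : {p : Fin n × Fin n // p.1 < p.2}) : Egen k n :=
  egen k p.1.1 p.1.2 p.2.ne * egen k p.1.2 p.1.1 p.2.ne'

/-- The family of generators `τ^m_{i,j}` (indexed by triples `(m, i, j)` with `i < j`,
`m ∉ {i, j}`). -/
noncomputable def tauFam (k : Type) [Field k] (n : ℕ)
    (t : {t : Fin n × Fin n × Fin n // t.2.1 < t.2.2 ∧ t.1 ≠ t.2.1 ∧ t.1 ≠ t.2.2}) :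
    Egen k n :=
  (egen k t.1.1 t.1.2.1 t.2.2.1 - egen k t.1.2.2 t.1.2.1 t.2.1.ne') *
    (egen k t.1.1 t.1.2.2 t.2.2.2 - egen k t.1.2.1 t.1.2.2 t.2.1.ne)

/-!
The ideal `I` is generated by a set `S` of elements of degree two, so its degree-two part is `span S`:
`span S ⊔ ⨆_{e > 2} ⋀ᵉ` is already a two-sided ideal, since `⋀⁰` consists of scalars and every
positive degree pushes `⋀²` above degree two.
The generators are triangular with respect to the coefficient forms of `e_{m,i} e_{m,j}` and
`e_{i,j} e_{j,i}`: the first monomial occurs only in `τ^m_{i,j}`, the second in `η_{i,j}` and in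
no other `η`. Counting gives `C(n,2) + C(n,2)(n-2) = C(n,2)(n-1)`.
-/

namespace ExteriorAlgebra

variable {R M : Type*} [CommRing R] [AddCommGroup M] [Module R M]

theorem ι_mem_exteriorPower_one (m : M) : ι R m ∈ ⋀[R]^1 M := by
  simpa only [pow_one] using LinearMap.mem_range_self (ι R) m

theorem ι_mul_ι_mem_exteriorPower_two (u w : M) : ι R u * ι R w ∈ ⋀[R]^2 M :=
  SetLike.GradedMul.mul_mem (ι_mem_exteriorPower_one u) (ι_mem_exteriorPower_one w)

theorem exteriorPower_mul_exteriorPower (a b : ℕ) :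
    ⋀[R]^a M * ⋀[R]^b M = ⋀[R]^(a + b) M :=
  (pow_add _ a b).symm

theorem iSup_exteriorPower_eq_top : ⨆ i, ⋀[R]^i M = ⊤ :=
  (DirectSum.Decomposition.isInternal fun i => ⋀[R]^i M).submodule_iSup_eq_top

theorem disjoint_exteriorPower_iSup_above (d : ℕ) :
    Disjoint (⋀[R]^d M) (⨆ m, ⋀[R]^(d + 1 + m) M) :=
  ((DirectSum.Decomposition.isInternal fun i => ⋀[R]^i M).submodule_iSupIndep d).mono_right
    (iSup_le fun m => le_iSup₂ (f := fun i (_ : i ≠ d) => ⋀[R]^i M) (d + 1 + m) (by omega))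

def spanSupAbove (S : Set (ExteriorAlgebra R M)) (d : ℕ) : Submodule R (ExteriorAlgebra R M) :=
  Submodule.span R S ⊔ ⨆ m, ⋀[R]^(d + 1 + m) M

variable {S : Set (ExteriorAlgebra R M)} {d : ℕ}

theorem exteriorPower_le_spanSupAbove {e : ℕ} (h : d < e) : ⋀[R]^e M ≤ spanSupAbove S d := by
  obtain ⟨m, rfl⟩ := Nat.exists_eq_add_of_le (Nat.succ_le_of_lt h)
  exact (le_iSup (fun m => ⋀[R]^(d + 1 + m) M) m).trans le_sup_right

theorem exteriorPower_mul_spanSupAbove_le (hS : S ⊆ ⋀[R]^d M) (e : ℕ) :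
    ⋀[R]^e M * spanSupAbove S d ≤ spanSupAbove S d := by
  rw [spanSupAbove, Submodule.mul_sup, Submodule.mul_iSup]
  refine sup_le ?_ (iSup_le fun m => ?_)
  · rcases e with _ | e
    · rw [exteriorPower, pow_zero, one_mul]
      exact le_sup_left
    · calc ⋀[R]^(e + 1) M * Submodule.span R S ≤ ⋀[R]^(e + 1) M * ⋀[R]^d M := by
            gcongr; exact Submodule.span_le.mpr hS
        _ ≤ spanSupAbove S d := by
          rw [exteriorPower_mul_exteriorPower]; exact exteriorPower_le_spanSupAbove (by omega)
  · rw [exteriorPower_mul_exteriorPower]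
    exact exteriorPower_le_spanSupAbove (by omega)

theorem spanSupAbove_mul_exteriorPower_le (hS : S ⊆ ⋀[R]^d M) (e : ℕ) :
    spanSupAbove S d * ⋀[R]^e M ≤ spanSupAbove S d := by
  rw [spanSupAbove, Submodule.sup_mul, Submodule.iSup_mul]
  refine sup_le ?_ (iSup_le fun m => ?_)
  · rcases e with _ | e
    · rw [exteriorPower, pow_zero, mul_one]
      exact le_sup_left
    · calc Submodule.span R S * ⋀[R]^(e + 1) M ≤ ⋀[R]^d M * ⋀[R]^(e + 1) M := by
            gcongr; exact Submodule.span_le.mpr hS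
        _ ≤ spanSupAbove S d := by
          rw [exteriorPower_mul_exteriorPower]; exact exteriorPower_le_spanSupAbove (by omega)
  · rw [exteriorPower_mul_exteriorPower]
    exact exteriorPower_le_spanSupAbove (by omega)

theorem mul_mem_spanSupAbove (hS : S ⊆ ⋀[R]^d M) (a : ExteriorAlgebra R M)
    {x : ExteriorAlgebra R M} (hx : x ∈ spanSupAbove S d) :
    a * x ∈ spanSupAbove S d ∧ x * a ∈ spanSupAbove S d := by
  have ha : a ∈ ⨆ i, ⋀[R]^i M := iSup_exteriorPower_eq_top (R := R) (M := M) ▸ Submodule.mem_top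
  constructor
  · refine (Submodule.iSup_mul _ _).le.trans (iSup_le fun e => ?_) (Submodule.mul_mem_mul ha hx)
    exact exteriorPower_mul_spanSupAbove_le hS e
  · refine (Submodule.mul_iSup _ _).le.trans (iSup_le fun e => ?_) (Submodule.mul_mem_mul hx ha)
    exact spanSupAbove_mul_exteriorPower_le hS e

theorem mem_spanSupAbove_of_mem_twoSidedIdealSpan (hS : S ⊆ ⋀[R]^d M) {x : ExteriorAlgebra R M}
    (hx : x ∈ TwoSidedIdeal.span S) : x ∈ spanSupAbove S d := by
  let J : TwoSidedIdeal (ExteriorAlgebra R M) :=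
    .mk' (spanSupAbove S d) (Submodule.zero_mem _) (Submodule.add_mem _) (Submodule.neg_mem _)
      (fun hy => (mul_mem_spanSupAbove hS _ hy).1) (fun hy => (mul_mem_spanSupAbove hS _ hy).2)
  have hSJ : S ⊆ J := fun _ hs => (TwoSidedIdeal.mem_mk' ..).mpr <|
    (le_sup_left : Submodule.span R S ≤ spanSupAbove S d) (Submodule.subset_span hs)
  exact (TwoSidedIdeal.mem_mk' ..).mp (TwoSidedIdeal.mem_span_iff.mp hx J hSJ)

theorem mem_span_of_mem_twoSidedIdealSpan (hS : S ⊆ ⋀[R]^d M) {x : ExteriorAlgebra R M}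
    (hx : x ∈ TwoSidedIdeal.span S) (hxd : x ∈ ⋀[R]^d M) : x ∈ Submodule.span R S := by
  obtain ⟨s, hs, h, hh, rfl⟩ :=
    Submodule.mem_sup.mp (mem_spanSupAbove_of_mem_twoSidedIdealSpan hS hx)
  have hsd : s ∈ ⋀[R]^d M := Submodule.span_le.mpr hS hs
  have hhd : h ∈ ⋀[R]^d M := by simpa using Submodule.sub_mem _ hxd hsd
  rwa [Submodule.disjoint_def.mp (disjoint_exteriorPower_iSup_above d) h hhd hh, add_zero]

noncomputable def wedgePairing (f g : Module.Dual R M) : ExteriorAlgebra R M →ₗ[R] R :=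
  liftAlternating (Pi.single 2 (Matrix.detRowAlternating.compLinearMap (LinearMap.pi ![f, g])))

theorem wedgePairing_ι_mul_ι (f g : Module.Dual R M) (u w : M) :
    wedgePairing f g (ι R u * ι R w) = f u * g w - f w * g u := by
  rw [wedgePairing, liftAlternating_ι_mul, liftAlternating_ι]
  simp only [AlternatingMap.curryLeft_apply_apply, Pi.single_eq_same]
  exact (Matrix.det_fin_two _).trans (by simp [mul_comm])

end ExteriorAlgebra

theorem LinearIndependent.sumElim_of_triangular {R V ι κ : Type*} [CommRing R]
    [AddCommGroup V] [Module R V] [Fintype ι] [Fintype κ] [DecidableEq ι] [DecidableEq κ]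
    {f : ι → V} {g : κ → V} (φ : κ → Module.Dual R V) (ψ : ι → Module.Dual R V)
    (hφf : ∀ t p, φ t (f p) = 0) (hφg : ∀ t t', φ t (g t') = if t' = t then 1 else 0)
    (hψf : ∀ p p', ψ p (f p') = if p' = p then 1 else 0) :
    LinearIndependent R (Sum.elim f g) := by
  rw [Fintype.linearIndependent_iff]
  intro c hc
  have hc' (χ : Module.Dual R V) :
      ∑ p, c (.inl p) * χ (f p) + ∑ t, c (.inr t) * χ (g t) = 0 := by
    simpa [Fintype.sum_sum_type] using congrArg χ hc
  have hg (t : κ) : c (.inr t) = 0 := by simpa [hφf, hφg] using hc' (φ t)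
  have hf (p : ι) : c (.inl p) = 0 := by simpa [hψf, hg] using hc' (ψ p)
  rintro (p | t)
  exacts [hf p, hg t]

open ExteriorAlgebra

abbrev PairIdx (n : ℕ) := {p : Fin n × Fin n // p.1 < p.2}

abbrev TripleIdx (n : ℕ) :=
  {t : Fin n × Fin n × Fin n // t.2.1 < t.2.2 ∧ t.1 ≠ t.2.1 ∧ t.1 ≠ t.2.2}

section Generators

variable (k : Type) [Field k] {n : ℕ}

theorem etaFam_eq (p : PairIdx n) : etaFam k n p =
    ι k (Finsupp.single ⟨(p.1.1, p.1.2), p.2.ne⟩ 1) *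
      ι k (Finsupp.single ⟨(p.1.2, p.1.1), p.2.ne'⟩ 1) :=
  rfl

theorem tauFam_eq (t : TripleIdx n) : tauFam k n t =
    ι k (Finsupp.single ⟨(t.1.1, t.1.2.1), t.2.2.1⟩ 1 -
        Finsupp.single ⟨(t.1.2.2, t.1.2.1), t.2.1.ne'⟩ 1) *
      ι k (Finsupp.single ⟨(t.1.1, t.1.2.2), t.2.2.2⟩ 1 -
        Finsupp.single ⟨(t.1.2.1, t.1.2.2), t.2.1.ne⟩ 1) := by
  simp only [tauFam, egen, map_sub]

theorem resGens_eq_range : resGens k n = Set.range (Sum.elim (etaFam k n) (tauFam k n)) := by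
  ext x
  constructor
  · rintro (⟨i, j, hij, rfl⟩ | ⟨i, j, m, hij, hmi, hmj, rfl⟩)
    exacts [⟨.inl ⟨(i, j), hij⟩, rfl⟩, ⟨.inr ⟨(m, i, j), hij, hmi, hmj⟩, rfl⟩]
  · rintro ⟨p | t, rfl⟩
    exacts [.inl ⟨p.1.1, p.1.2, p.2, rfl⟩,
      .inr ⟨t.1.2.1, t.1.2.2, t.1.1, t.2.1, t.2.2.1, t.2.2.2, rfl⟩]

theorem resGens_subset_exteriorPower_two : resGens k n ⊆ ⋀[k]^2 (RIdx n →₀ k) := by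
  rw [resGens_eq_range]
  rintro _ ⟨p | t, rfl⟩
  · rw [Sum.elim_inl, etaFam_eq]; exact ι_mul_ι_mem_exteriorPower_two _ _
  · rw [Sum.elim_inr, tauFam_eq]; exact ι_mul_ι_mem_exteriorPower_two _ _

theorem span_resGens_eq_resI2 : Submodule.span k (resGens k n) = resI2 k n := by
  refine le_antisymm (Submodule.span_le.mpr fun x hx => ⟨?_, ?_⟩) fun x ⟨hxI, hx2⟩ => ?_
  · exact TwoSidedIdeal.subset_span hx
  · exact resGens_subset_exteriorPower_two k hx
  · exact mem_span_of_mem_twoSidedIdealSpan (resGens_subset_exteriorPower_two k) hxI hx2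

noncomputable def wedgeCoeff (x y : RIdx n) : Module.Dual k (Egen k n) :=
  wedgePairing (Finsupp.lapply x) (Finsupp.lapply y)

theorem wedgeCoeff_tauFam_tauFam (t t' : TripleIdx n) :
    wedgeCoeff k ⟨(t.1.1, t.1.2.1), t.2.2.1⟩ ⟨(t.1.1, t.1.2.2), t.2.2.2⟩ (tauFam k n t') =
      if t' = t then 1 else 0 := by
  obtain ⟨⟨m, i, j⟩, hij, hmi, hmj⟩ := t
  obtain ⟨⟨m', i', j'⟩, hij', hmi', hmj'⟩ := t'
  dsimp only at hij hmi hmj hij' hmi' hmj'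
  rw [tauFam_eq, wedgeCoeff, wedgePairing_ι_mul_ι]
  simp only [map_sub, Finsupp.lapply_apply, Finsupp.single_apply, Subtype.mk.injEq, Prod.mk.injEq]
  split_ifs <;> first | omega | norm_num

theorem wedgeCoeff_tauFam_etaFam (t : TripleIdx n) (p : PairIdx n) :
    wedgeCoeff k ⟨(t.1.1, t.1.2.1), t.2.2.1⟩ ⟨(t.1.1, t.1.2.2), t.2.2.2⟩ (etaFam k n p) = 0 := by
  obtain ⟨⟨m, i, j⟩, hij, hmi, hmj⟩ := t
  obtain ⟨⟨a, b⟩, hab⟩ := p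
  dsimp only at hij hmi hmj hab
  rw [etaFam_eq, wedgeCoeff, wedgePairing_ι_mul_ι]
  simp only [Finsupp.lapply_apply, Finsupp.single_apply, Subtype.mk.injEq, Prod.mk.injEq]
  split_ifs <;> first | omega | norm_num

theorem wedgeCoeff_etaFam_etaFam (p p' : PairIdx n) :
    wedgeCoeff k ⟨(p.1.1, p.1.2), p.2.ne⟩ ⟨(p.1.2, p.1.1), p.2.ne'⟩ (etaFam k n p') =
      if p' = p then 1 else 0 := by
  obtain ⟨⟨i, j⟩, hij⟩ := p
  obtain ⟨⟨a, b⟩, hab⟩ := p'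
  dsimp only at hij hab
  rw [etaFam_eq, wedgeCoeff, wedgePairing_ι_mul_ι]
  simp only [Finsupp.lapply_apply, Finsupp.single_apply, Subtype.mk.injEq, Prod.mk.injEq]
  split_ifs <;> first | omega | norm_num

theorem linearIndependent_etaFam_tauFam :
    LinearIndependent k (Sum.elim (etaFam k n) (tauFam k n)) :=
  .sumElim_of_triangular
    (fun t => wedgeCoeff k ⟨(t.1.1, t.1.2.1), t.2.2.1⟩ ⟨(t.1.1, t.1.2.2), t.2.2.2⟩)
    (fun p => wedgeCoeff k ⟨(p.1.1, p.1.2), p.2.ne⟩ ⟨(p.1.2, p.1.1), p.2.ne'⟩)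
    (wedgeCoeff_tauFam_etaFam k) (wedgeCoeff_tauFam_tauFam k) (wedgeCoeff_etaFam_etaFam k)

end Generators

theorem card_pairIdx (n : ℕ) : Fintype.card (PairIdx n) = n.choose 2 := by
  rw [Fintype.card_subtype, Fintype.card_product_filter_lt, Fintype.card_fin]

def tripleIdxEquiv (n : ℕ) :
    TripleIdx n ≃ Σ p : PairIdx n, {m : Fin n // m ≠ p.1.1 ∧ m ≠ p.1.2} where
  toFun t := ⟨⟨t.1.2, t.2.1⟩, ⟨t.1.1, t.2.2⟩⟩
  invFun x := ⟨(x.2.1, x.1.1), x.1.2, x.2.2⟩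
  left_inv _ := rfl
  right_inv _ := rfl

theorem Fin.card_subtype_ne_and_ne {n : ℕ} {i j : Fin n} (hij : i ≠ j) :
    Fintype.card {m : Fin n // m ≠ i ∧ m ≠ j} = n - 2 := by
  have : ({m | m ≠ i ∧ m ≠ j} : Finset (Fin n)) = Finset.univ \ {i, j} := by
    ext m
    simp
  rw [Fintype.card_subtype, this, Finset.card_sdiff_of_subset (Finset.subset_univ _),
    Finset.card_pair hij, Finset.card_univ, Fintype.card_fin]

theorem card_tripleIdx (n : ℕ) : Fintype.card (TripleIdx n) = n.choose 2 * (n - 2) := by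
  rw [Fintype.card_congr (tripleIdxEquiv n), Fintype.card_sigma,
    Finset.sum_congr rfl fun p _ => Fin.card_subtype_ne_and_ne p.2.ne, Finset.sum_const,
    Finset.card_univ, card_pairIdx, smul_eq_mul]

theorem eta_tau_basis_of_I2_general
    (k : Type) [Field k] (n : ℕ) (hn : 2 ≤ n) :
    LinearIndependent k (Sum.elim (etaFam k n) (tauFam k n)) ∧
    Submodule.span k (Set.range (Sum.elim (etaFam k n) (tauFam k n))) = resI2 k n ∧
    Module.finrank k (resI2 k n) = n.choose 2 * (n - 1) := by
  have hspan : Submodule.span k (Set.range (Sum.elim (etaFam k n) (tauFam k n))) = resI2 k n := by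
    rw [← resGens_eq_range, span_resGens_eq_resI2]
  refine ⟨linearIndependent_etaFam_tauFam k, hspan, ?_⟩
  rw [← hspan, finrank_span_eq_card (linearIndependent_etaFam_tauFam k), Fintype.card_sum,
    card_pairIdx, card_tripleIdx, add_comm, ← Nat.mul_succ]
  congr 2
  omega

/-- For `n ≥ 2`, the `η_{i,j}` (for `i < j`) together with the `τ^m_{i,j}` (for `i < j`,
`m ∉ {i,j}`) are linearly independent in `E²` and form a basis of `I² = I ∩ E²`;
in particular `dim_k I² = C(n,2)·(n−1)`. -/
theorem eta_tau_basis_of_I2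
    (k : Type) [Field k] [CharZero k] (n : ℕ) (hn : 2 ≤ n) :
    LinearIndependent k (Sum.elim (etaFam k n) (tauFam k n)) ∧
    Submodule.span k (Set.range (Sum.elim (etaFam k n) (tauFam k n))) = resI2 k n ∧
    Module.finrank k (resI2 k n) = n.choose 2 * (n - 1) :=
  eta_tau_basis_of_I2_general k n hn
end

section
/- Let n ≥ 3 and 1 ≤ i < j < k ≤ n. Every element a of C_{i,j,k} = span{e_{j,i} − e_{k,i}, e_{i,j} − e_{k,j}, e_{i,k} − e_{j,k}} ⊆ A¹ lies in the first resonance variety: C_{i,j,k} ⊆ R¹. -/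
section Aux
open ExteriorAlgebra TrivSqZeroExt

variable (k : Type) [Field k] (n : ℕ)

noncomputable
def evAlg (f : (RIdx n →₀ k) →ₗ[k] k) : Egen k n →ₐ[k] DualNumber k :=
  ExteriorAlgebra.lift k ⟨(TrivSqZeroExt.inrHom k k).comp f, fun x => by
    simp⟩

@[simp] lemma evAlg_ι (f : (RIdx n →₀ k) →ₗ[k] k) (w : RIdx n →₀ k) :
    evAlg k n f (ExteriorAlgebra.ι k w) = TrivSqZeroExt.inr (f w) := by
  simp [evAlg, ExteriorAlgebra.lift_ι_apply]

lemma evAlg_ideal (f : (RIdx n →₀ k) →ₗ[k] k) {z : Egen k n}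
    (hz : z ∈ resIdeal k n) : evAlg k n f z = 0 := by
  have : z ∈ TwoSidedIdeal.ker (evAlg k n f) := by
    refine TwoSidedIdeal.mem_span_iff.mp hz _ ?_
    rintro x (⟨i, j, hij, rfl⟩ | ⟨i, j, m, hij, hmi, hmj, rfl⟩) <;>
      rw [SetLike.mem_coe, TwoSidedIdeal.mem_ker] <;>
      simp [egen, mul_sub, sub_mul]
  rwa [TwoSidedIdeal.mem_ker] at this

lemma resπ_eq_zero_iff (z : Egen k n) :
    resπ k n z = 0 ↔ z ∈ resIdeal k n := by
  have h : resπ k n z = (resIdeal k n).ringCon.mk' z := rfl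
  rw [h, ← TwoSidedIdeal.mem_ker, TwoSidedIdeal.ker_ringCon_mk']

end Aux

section Main
open ExteriorAlgebra TrivSqZeroExt

variable {k : Type} [Field k] {n : ℕ}

lemma mem_resAmod_one (w : RIdx n →₀ k) :
    resπ k n (ExteriorAlgebra.ι k w) ∈ resAmod k n 1 := by
  refine ⟨ExteriorAlgebra.ι k w, ?_, rfl⟩
  show _ ∈ (LinearMap.range (ExteriorAlgebra.ι k) ^ 1 : Submodule k (Egen k n))
  rw [pow_one]
  exact ⟨w, rfl⟩

lemma map_resAmod_zero_le (a : resA k n) :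
    Submodule.map (LinearMap.mulLeft k a) (resAmod k n 0) ≤ Submodule.span k {a} := by
  rintro _ ⟨_, ⟨t, ht, rfl⟩, rfl⟩
  have ht' : t ∈ (1 : Submodule k (Egen k n)) := by
    rw [show (1 : Submodule k (Egen k n))
        = (LinearMap.range (ExteriorAlgebra.ι k) ^ 0 : Submodule k (Egen k n)) from (pow_zero _).symm]
    exact ht
  obtain ⟨c, rfl⟩ := Submodule.mem_one.mp ht'
  have hc : (resπ k n) (algebraMap k (Egen k n) c) = algebraMap k (resA k n) c :=
    (resπ k n).commutes c
  rw [LinearMap.mulLeft_apply, AlgHom.toLinearMap_apply, hc, ← Algebra.commutes,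
    ← Algebra.smul_def]
  exact Submodule.smul_mem _ c (Submodule.mem_span_singleton_self a)

end Main

set_option maxHeartbeats 2000000 in
/-- For `n ≥ 3` and `i < j < m`, the subspace
`C_{i,j,m} = span{e_{j,i} − e_{m,i}, e_{i,j} − e_{m,j}, e_{i,m} − e_{j,m}}` of `A¹` is
contained in the first resonance variety `R¹`. -/
theorem C3_subset_resonance
    (k : Type) [Field k] [IsAlgClosed k] [CharZero k] (n : ℕ) (hn : 3 ≤ n)
    (i j m : Fin n) (hij : i < j) (hjm : j < m) :
    (resC3 k n i j m hij.ne (hij.trans hjm).ne hjm.ne : Set (resA k n)) ⊆ resR1 k n := by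
  have him : i < m := hij.trans hjm
  intro a ha
  -- the three basis vectors of `C` downstairs in `V = RIdx n →₀ k`
  set w1 : RIdx n →₀ k :=
    Finsupp.single ⟨(j, i), hij.ne'⟩ 1 - Finsupp.single ⟨(m, i), him.ne'⟩ 1 with hw1
  set w2 : RIdx n →₀ k :=
    Finsupp.single ⟨(i, j), hij.ne⟩ 1 - Finsupp.single ⟨(m, j), hjm.ne'⟩ 1 with hw2
  set w3 : RIdx n →₀ k :=
    Finsupp.single ⟨(i, m), him.ne⟩ 1 - Finsupp.single ⟨(j, m), hjm.ne⟩ 1 with hw3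
  have hd1 : egen k j i (Ne.symm hij.ne) - egen k m i (Ne.symm him.ne)
      = ExteriorAlgebra.ι k w1 := by simp [egen, hw1]
  have hd2 : egen k i j hij.ne - egen k m j (Ne.symm hjm.ne)
      = ExteriorAlgebra.ι k w2 := by simp [egen, hw2]
  have hd3 : egen k i m him.ne - egen k j m hjm.ne
      = ExteriorAlgebra.ι k w3 := by simp [egen, hw3]
  rw [resC3, SetLike.mem_coe, hd1, hd2, hd3] at ha
  -- extract coefficients
  rw [Submodule.mem_span_insert] at ha
  obtain ⟨c1, z1, hz1, rfl⟩ := ha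
  rw [Submodule.mem_span_insert] at hz1
  obtain ⟨c2, z2, hz2, rfl⟩ := hz1
  rw [Submodule.mem_span_singleton] at hz2
  obtain ⟨c3, rfl⟩ := hz2
  set e0 : RIdx n →₀ k := c1 • w1 + c2 • w2 + c3 • w3 with he0
  set a : resA k n := c1 • resπ k n (ExteriorAlgebra.ι k w1) +
      (c2 • resπ k n (ExteriorAlgebra.ι k w2) + c3 • resπ k n (ExteriorAlgebra.ι k w3)) with ha_def
  have ha_eq : a = resπ k n (ExteriorAlgebra.ι k e0) := by
    simp [ha_def, he0, map_add, map_smul, add_assoc]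
  -- the three pairwise products lie in the ideal
  have h12 : ExteriorAlgebra.ι k w1 * ExteriorAlgebra.ι k w2 ∈ resIdeal k n := by
    have hg : (egen k m i him.ne' - egen k j i hij.ne') *
        (egen k m j hjm.ne' - egen k i j hij.ne) ∈ resGens k n :=
      Or.inr ⟨i, j, m, hij, him.ne', hjm.ne', rfl⟩
    have hmem := TwoSidedIdeal.subset_span hg
    have e1 : ExteriorAlgebra.ι k w1 = -(egen k m i him.ne' - egen k j i hij.ne') := by
      simp [egen, hw1]
    have e2 : ExteriorAlgebra.ι k w2 = -(egen k m j hjm.ne' - egen k i j hij.ne) := by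
      simp [egen, hw2]
    rw [e1, e2, neg_mul_neg]
    exact hmem
  have h13 : ExteriorAlgebra.ι k w1 * ExteriorAlgebra.ι k w3 ∈ resIdeal k n := by
    have hg : (egen k j i hij.ne' - egen k m i him.ne') *
        (egen k j m hjm.ne - egen k i m him.ne) ∈ resGens k n :=
      Or.inr ⟨i, m, j, him, hij.ne', hjm.ne, rfl⟩
    have hmem := TwoSidedIdeal.subset_span hg
    have e1 : ExteriorAlgebra.ι k w1 = egen k j i hij.ne' - egen k m i him.ne' := by
      simp [egen, hw1]
    have e3 : ExteriorAlgebra.ι k w3 = -(egen k j m hjm.ne - egen k i m him.ne) := by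
      simp [egen, hw3]
    rw [e1, e3, mul_neg]
    exact (resIdeal k n).neg_mem hmem
  have h23 : ExteriorAlgebra.ι k w2 * ExteriorAlgebra.ι k w3 ∈ resIdeal k n := by
    have hg : (egen k i j hij.ne - egen k m j hjm.ne') *
        (egen k i m him.ne - egen k j m hjm.ne) ∈ resGens k n :=
      Or.inr ⟨j, m, i, hjm, hij.ne, him.ne, rfl⟩
    have hmem := TwoSidedIdeal.subset_span hg
    rw [← hd2, ← hd3]
    exact hmem
  -- membership of the ideal, as a submodule, of all products `ι e0 * ι w_p`
  have swap : ∀ x y : RIdx n →₀ k, ExteriorAlgebra.ι k y * ExteriorAlgebra.ι k x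
      = -(ExteriorAlgebra.ι k x * ExteriorAlgebra.ι k y) := fun x y =>
    eq_neg_of_add_eq_zero_right (ExteriorAlgebra.ι_add_mul_swap x y)
  have hsq : ∀ x : RIdx n →₀ k,
      ExteriorAlgebra.ι k x * ExteriorAlgebra.ι k x ∈ resIdealSub k n := fun x => by
    rw [ExteriorAlgebra.ι_sq_zero]; exact (resIdealSub k n).zero_mem
  have hprod : ∀ x : RIdx n →₀ k,
      ExteriorAlgebra.ι k w1 * ExteriorAlgebra.ι k x ∈ resIdealSub k n →
      ExteriorAlgebra.ι k w2 * ExteriorAlgebra.ι k x ∈ resIdealSub k n →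
      ExteriorAlgebra.ι k w3 * ExteriorAlgebra.ι k x ∈ resIdealSub k n →
      ExteriorAlgebra.ι k e0 * ExteriorAlgebra.ι k x ∈ resIdealSub k n := by
    intro x m1 m2 m3
    have expand : ExteriorAlgebra.ι k e0 * ExteriorAlgebra.ι k x
        = c1 • (ExteriorAlgebra.ι k w1 * ExteriorAlgebra.ι k x)
        + c2 • (ExteriorAlgebra.ι k w2 * ExteriorAlgebra.ι k x)
        + c3 • (ExteriorAlgebra.ι k w3 * ExteriorAlgebra.ι k x) := by
      simp [he0, map_add, map_smul, add_mul, smul_mul_assoc]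
    rw [expand]
    exact add_mem (add_mem (Submodule.smul_mem _ _ m1) (Submodule.smul_mem _ _ m2))
      (Submodule.smul_mem _ _ m3)
  have hmul : ∀ x : RIdx n →₀ k,
      ExteriorAlgebra.ι k e0 * ExteriorAlgebra.ι k x ∈ resIdealSub k n →
      a * resπ k n (ExteriorAlgebra.ι k x) = 0 := by
    intro x hx
    rw [ha_eq, ← map_mul]
    exact (resπ_eq_zero_iff k n _).mpr hx
  have hmul1 : a * resπ k n (ExteriorAlgebra.ι k w1) = 0 := by
    refine hmul w1 (hprod w1 (hsq w1) ?_ ?_)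
    · rw [swap]; exact (resIdealSub k n).neg_mem h12
    · rw [swap]; exact (resIdealSub k n).neg_mem h13
  have hmul2 : a * resπ k n (ExteriorAlgebra.ι k w2) = 0 := by
    refine hmul w2 (hprod w2 h12 (hsq w2) ?_)
    rw [swap]; exact (resIdealSub k n).neg_mem h23
  -- membership of `a` in `A¹`
  have ha1 : a ∈ resAmod k n 1 := by
    rw [ha_eq]; exact mem_resAmod_one e0
  -- the coordinate functionals
  set f1 : (RIdx n →₀ k) →ₗ[k] k := Finsupp.lapply (⟨(j, i), hij.ne'⟩ : RIdx n) with hf1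
  set f2 : (RIdx n →₀ k) →ₗ[k] k := Finsupp.lapply (⟨(i, j), hij.ne⟩ : RIdx n) with hf2
  have hne : ∀ (p q p' q' : Fin n) (h : p ≠ q) (h' : p' ≠ q'), (p, q) ≠ (p', q') →
      Finsupp.single (⟨(p, q), h⟩ : RIdx n) (1 : k) ⟨(p', q'), h'⟩ = 0 := by
    intro p q p' q' h h' hne
    rw [Finsupp.single_apply_eq_zero]
    intro hEq
    exact absurd (congrArg Subtype.val hEq).symm hne
  have hf1w1 : f1 w1 = 1 := by
    rw [hf1, hw1]
    simp only [Finsupp.lapply_apply, Finsupp.sub_apply, Finsupp.single_eq_same]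
    rw [hne m i j i him.ne' hij.ne' (by simp [hjm.ne'])]
    ring
  have hf1w2 : f1 w2 = 0 := by
    rw [hf1, hw2]
    simp only [Finsupp.lapply_apply, Finsupp.sub_apply]
    rw [hne i j j i hij.ne hij.ne' (by simp [hij.ne]),
      hne m j j i hjm.ne' hij.ne' (by simp [hjm.ne'])]
    ring
  have hf1w3 : f1 w3 = 0 := by
    rw [hf1, hw3]
    simp only [Finsupp.lapply_apply, Finsupp.sub_apply]
    rw [hne i m j i him.ne hij.ne' (by simp [hij.ne]),
      hne j m j i hjm.ne hij.ne' (by simp [him.ne'])]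
    ring
  have hf2w1 : f2 w1 = 0 := by
    rw [hf2, hw1]
    simp only [Finsupp.lapply_apply, Finsupp.sub_apply]
    rw [hne j i i j hij.ne' hij.ne (by simp [hij.ne']),
      hne m i i j him.ne' hij.ne (by simp [him.ne'])]
    ring
  have hf2w2 : f2 w2 = 1 := by
    rw [hf2, hw2]
    simp only [Finsupp.lapply_apply, Finsupp.sub_apply, Finsupp.single_eq_same]
    rw [hne m j i j hjm.ne' hij.ne (by simp [him.ne'])]
    ring
  have hf2w3 : f2 w3 = 0 := by
    rw [hf2, hw3]
    simp only [Finsupp.lapply_apply, Finsupp.sub_apply]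
    rw [hne i m i j him.ne hij.ne (by simp [hjm.ne']),
      hne j m i j hjm.ne hij.ne (by simp [hij.ne'])]
    ring
  -- the key coefficient extraction
  have coeff : ∀ (f : (RIdx n →₀ k) →ₗ[k] k) (c : k) (w : RIdx n →₀ k),
      c • a = resπ k n (ExteriorAlgebra.ι k w) → f w = c * f e0 := by
    intro f c w h
    have hz : ExteriorAlgebra.ι k w - c • ExteriorAlgebra.ι k e0 ∈ resIdeal k n := by
      rw [← resπ_eq_zero_iff, map_sub, map_smul, ← ha_eq, ← h, sub_self]
    have hev := evAlg_ideal k n f hz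
    rw [map_sub, map_smul, evAlg_ι, evAlg_ι] at hev
    have h0 : f w - c * f e0 = 0 := by
      simpa [mul_comm] using congrArg TrivSqZeroExt.snd hev
    exact sub_eq_zero.mp h0
  have hfe0 : ∀ f : (RIdx n →₀ k) →ₗ[k] k,
      f e0 = c1 * f w1 + c2 * f w2 + c3 * f w3 := by
    intro f; rw [he0]; simp [mul_comm]
  -- conclude
  by_cases h1 : resπ k n (ExteriorAlgebra.ι k w1) ∈ Submodule.span k {a}
  · -- use x = π(ι w2)
    refine ⟨ha1, resπ k n (ExteriorAlgebra.ι k w2), mem_resAmod_one w2, hmul2, fun hx => ?_⟩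
    obtain ⟨c, hc⟩ := Submodule.mem_span_singleton.mp h1
    obtain ⟨d, hd⟩ := Submodule.mem_span_singleton.mp (map_resAmod_zero_le a hx)
    have e11 := coeff f1 c w1 hc
    have e21 := coeff f2 c w1 hc
    have e12 := coeff f1 d w2 hd
    have e22 := coeff f2 d w2 hd
    rw [hfe0 f1] at e11 e12
    rw [hfe0 f2] at e21 e22
    rw [hf1w1, hf1w2, hf1w3] at e11 e12
    rw [hf2w1, hf2w2, hf2w3] at e21 e22
    -- e11 : 1 = c * (c1*1 + c2*0 + c3*0), etc.
    have hc1 : c * c1 = 1 := by linear_combination -e11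
    have hd1 : d * c1 = 0 := by linear_combination -e12
    have hd2 : d * c2 = 1 := by linear_combination -e22
    have hcne : c1 ≠ 0 := fun h => by simp [h] at hc1
    have hdz : d = 0 := by
      rcases mul_eq_zero.mp hd1 with h | h
      · exact h
      · exact absurd h hcne
    rw [hdz, zero_mul] at hd2
    exact one_ne_zero hd2.symm
  · -- use x = π(ι w1)
    exact ⟨ha1, resπ k n (ExteriorAlgebra.ι k w1), mem_resAmod_one w1, hmul1,
      fun hx => h1 (map_resAmod_zero_le a hx)⟩
end
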